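/- For a language L, the Kleene star L* has a finite SSF if and only if there exists a word w such that L ⊆ w*. -/

import Mathlib

/-- `npow w n` is the word `w` repeated `n` times. -/
def npow {α : Type*} (w : List α) : ℕ → List α
  | 0 => []
  | n + 1 => w ++ npow w n

/-- `occ w x` is the number of occurrences of `x` as a factor of `w`,
i.e. the number of factorizations `w = s ++ x ++ t`. -/
def occ {α : Type*} [DecidableEq α] (w x : List α) : ℕ :=
  ((List.range (w.length + 1)).filter (fun i => x <+: w.drop i)).length

/-- A nonempty word is primitive if it is not a power of a shorter word. -/
def Primitive {α : Type*} (p : List α) : Prop :=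
  p ≠ [] ∧ ∀ (q : List α) (n : ℕ), p = npow q n → q = p

/-- `u` and `v` are `k`-abelian equivalent. -/
def KAbEq {α : Type*} [DecidableEq α] (k : ℕ) (u v : List α) : Prop :=
  ∀ x : List α, x.length ≤ k → occ u x = occ v x

/-- `X` is a separating set of factors of `L`. -/
def IsSSF {α : Type*} [DecidableEq α] (X L : Set (List α)) : Prop :=
  ∀ u ∈ L, ∀ v ∈ L, u ≠ v → ∃ x ∈ X, occ u x ≠ occ v x

/-- `L` has a finite separating set of factors. -/
def HasFiniteSSF {α : Type*} [DecidableEq α] (L : Set (List α)) : Prop :=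
  ∃ X : Set (List α), X.Finite ∧ IsSSF X L

/-- The Kleene star of `L`. -/
def kstar {α : Type*} (L : Set (List α)) : Set (List α) :=
  {w | ∃ ls : List (List α), (∀ x ∈ ls, x ∈ L) ∧ w = ls.flatten}

set_option linter.unusedSectionVars false

namespace Aux
variable {α : Type*} [DecidableEq α]

theorem npow_add (w : List α) (m n : ℕ) : npow w (m + n) = npow w m ++ npow w n := by
  induction m with
  | zero => simp [npow]
  | succ m ih => rw [Nat.succ_add]; simp [npow, ih]

theorem npow_succ' (w : List α) (n : ℕ) : npow w (n + 1) = npow w n ++ w := by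
  rw [npow_add]; simp [npow]

theorem length_npow (w : List α) (n : ℕ) : (npow w n).length = n * w.length := by
  induction n with
  | zero => simp [npow]
  | succ n ih => simp [npow, ih]; ring

theorem npow_nil (n : ℕ) : npow ([] : List α) n = [] := by
  induction n with
  | zero => rfl
  | succ n ih => simp [npow, ih]

theorem npow_ne_nil {w : List α} (hw : w ≠ []) {n : ℕ} (hn : 1 ≤ n) : npow w n ≠ [] := by
  cases n with
  | zero => omega
  | succ n => simp [npow, hw]

theorem npow_prefix (w : List α) {m n : ℕ} (h : m ≤ n) : npow w m <+: npow w n := by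
  obtain ⟨k, rfl⟩ := Nat.exists_eq_add_of_le h
  rw [npow_add]; exact List.prefix_append _ _

theorem comm_npow {u a : List α} (h : a ++ u = u ++ a) (n : ℕ) :
    a ++ npow u n = npow u n ++ a := by
  induction n with
  | zero => simp [npow]
  | succ n ih =>
    show a ++ (u ++ npow u n) = (u ++ npow u n) ++ a
    rw [← List.append_assoc, h, List.append_assoc, ih, List.append_assoc]

theorem join_replicate (u : List α) (n : ℕ) : (List.replicate n u).flatten = npow u n := by
  induction n with
  | zero => rfl
  | succ n ih => simp [List.replicate_succ, npow, ih]

/-- count positions `i ∈ [a, a+n)` where `x` occurs in `w` at `i`. -/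
def cnt (w x : List α) (a n : ℕ) : ℕ :=
  ((List.range' a n).filter (fun i => x <+: w.drop i)).length

theorem occ_eq_cnt (w x : List α) : occ w x = cnt w x 0 (w.length + 1) := by
  rw [occ, cnt, List.range_eq_range']

theorem cnt_split (w x : List α) (a m n : ℕ) :
    cnt w x a (m + n) = cnt w x a m + cnt w x (a + m) n := by
  rw [cnt, cnt, cnt, ← List.range'_append, List.filter_append,
    List.length_append, Nat.one_mul]

theorem cnt_one (w x : List α) (a : ℕ) :
    cnt w x a 1 = if x <+: w.drop a then 1 else 0 := by
  rw [cnt]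
  by_cases h : x <+: w.drop a <;> simp [List.range', List.filter, h]

theorem cnt_congr {w w' x : List α} {a n : ℕ}
    (h : ∀ i, a ≤ i → i < a + n → (x <+: w.drop i ↔ x <+: w'.drop i)) :
    cnt w x a n = cnt w' x a n := by
  rw [cnt, cnt, List.filter_congr]
  intro i hi
  rw [List.mem_range'_1] at hi
  simp only [decide_eq_decide]
  exact h i hi.1 hi.2

/-- occurrences can't start where there's not enough room -/
theorem cnt_eq_zero {w x : List α} {a n : ℕ} (hx : x ≠ []) (h : w.length < a + x.length) :
    cnt w x a n = 0 := by
  rw [cnt, List.length_eq_zero_iff]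
  rw [List.filter_eq_nil_iff]
  intro i hi
  rw [List.mem_range'_1] at hi
  simp only [decide_eq_true_eq]
  intro hpre
  have h1 := hpre.length_le
  have h2 : 0 < x.length := List.length_pos_iff.mpr hx
  rw [List.length_drop] at h1
  omega

/-- positions past a prefix: shift -/
theorem cnt_shift (s t x : List α) (a n : ℕ) :
    cnt (s ++ t) x (s.length + a) n = cnt t x a n := by
  rw [cnt, cnt, List.range'_eq_map_range, List.range'_eq_map_range, List.filter_map,
    List.filter_map, List.length_map, List.length_map]
  congr 1
  apply List.filter_congr
  intro i _
  simp only [Function.comp_apply, decide_eq_decide]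
  rw [Nat.add_assoc, List.drop_length_add_append]

/-- counting within a long-enough prefix -/
theorem cnt_of_prefix {s w : List α} (x : List α) {a n : ℕ} (hp : s <+: w)
    (h : a + n + x.length ≤ s.length + 1) :
    cnt s x a n = cnt w x a n := by
  apply cnt_congr
  intro i hia hin
  constructor
  · intro hx; exact hx.trans (hp.drop i)
  · intro hx
    exact List.prefix_of_prefix_length_le hx (hp.drop i)
      (by simp [List.length_drop]; have := hp.length_le; omega)


theorem occ_nil (w : List α) : occ w [] = w.length + 1 := by
  simp [occ, List.nil_prefix]

/-- periodicity: occurrence at `s + |u|` in `u^K` iff occurrence at `s`. -/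
theorem period_iff {u x : List α} (hu : u ≠ []) {K s : ℕ}
    (h : s + u.length + x.length ≤ K * u.length) :
    (x <+: (npow u K).drop (s + u.length) ↔ x <+: (npow u K).drop s) := by
  have hU : 0 < u.length := List.length_pos_iff.mpr hu
  obtain ⟨K', rfl⟩ : ∃ K', K = K' + 1 := by
    cases K with
    | zero => exact absurd h (by omega)
    | succ K' => exact ⟨K', rfl⟩
  have hd : (npow u (K' + 1)).drop (s + u.length) = (npow u K').drop s := by
    show (u ++ npow u K').drop (s + u.length) = _
    rw [Nat.add_comm s u.length, List.drop_length_add_append]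
  have hpre : (npow u K').drop s <+: (npow u (K' + 1)).drop s :=
    (npow_prefix u (Nat.le_succ K')).drop s
  rw [hd]
  constructor
  · intro hx; exact hx.trans hpre
  · intro hx
    apply List.prefix_of_prefix_length_le hx hpre
    rw [List.length_drop, length_npow]
    have hh : (K' + 1) * u.length = K' * u.length + u.length := by ring
    rw [hh] at h
    omega

/-- window invariance: any window of length `|u|` in `u^K` has the same count. -/
theorem window (u x : List α) (hu : u ≠ []) (K : ℕ) :
    ∀ s, s + u.length + x.length ≤ K * u.length + 1 →
      cnt (npow u K) x s u.length = cnt (npow u K) x 0 u.length := by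
  have hU : 0 < u.length := List.length_pos_iff.mpr hu
  intro s
  induction s with
  | zero => intro _; rfl
  | succ s ih =>
    intro hcond
    have hper : (x <+: (npow u K).drop (s + u.length) ↔ x <+: (npow u K).drop s) :=
      period_iff hu (by omega)
    have step : cnt (npow u K) x (s + 1) u.length = cnt (npow u K) x s u.length := by
      obtain ⟨U', hU'⟩ : ∃ U', u.length = U' + 1 := ⟨u.length - 1, by omega⟩
      have e1 : cnt (npow u K) x s u.length
          = cnt (npow u K) x s 1 + cnt (npow u K) x (s + 1) U' := by
        rw [hU', Nat.add_comm U' 1, cnt_split]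
      have e2 : cnt (npow u K) x (s + 1) u.length
          = cnt (npow u K) x (s + 1) U' + cnt (npow u K) x (s + 1 + U') 1 := by
        rw [hU', cnt_split]
      have e3 : cnt (npow u K) x (s + 1 + U') 1 = cnt (npow u K) x s 1 := by
        rw [cnt_one, cnt_one]
        have : s + 1 + U' = s + u.length := by omega
        rw [this]
        simp [hper]
      omega
    rw [step, ih (by omega)]

/-- The key lemma: `u^{k+1} v u^k` and `u^k v u^{k+1}` have the same number of
occurrences of every factor of length at most `k+1`. -/
theorem main_occ {u : List α} (v x : List α) (hu : u ≠ []) {k : ℕ}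
    (hx : x.length ≤ k + 1) :
    occ (npow u (k+1) ++ v ++ npow u k) x = occ (npow u k ++ v ++ npow u (k+1)) x := by
  have hU : 0 < u.length := List.length_pos_iff.mpr hu
  have hkU : k ≤ k * u.length := Nat.le_mul_of_pos_right k hU
  have hmul : (k + 1) * u.length = k * u.length + u.length := by ring
  rcases eq_or_ne x [] with rfl | hxne
  · rw [occ_nil, occ_nil]
    simp [length_npow]
    ring
  have hL : 0 < x.length := List.length_pos_iff.mpr hxne
  set C : List α := npow u k ++ v ++ npow u k with hCdef
  have hClen : C.length = k * u.length + v.length + k * u.length := by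
    simp [hCdef, length_npow]
    ring
  have hA : npow u (k+1) ++ v ++ npow u k = u ++ C := by
    show (u ++ npow u k) ++ v ++ npow u k = _
    simp [hCdef, List.append_assoc]
  have hB : npow u k ++ v ++ npow u (k+1) = C ++ u := by
    rw [npow_succ']
    simp [hCdef, List.append_assoc]
  rw [hA, hB]
  -- occ (u ++ C) = cnt over first |u| positions + occ C
  have eA : occ (u ++ C) x = cnt (u ++ C) x 0 u.length + occ C x := by
    rw [occ_eq_cnt, occ_eq_cnt]
    have hlen : (u ++ C).length + 1 = u.length + (C.length + 1) := by
      simp [List.length_append]; omega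
    rw [hlen, cnt_split, Nat.zero_add]
    congr 1
    have := cnt_shift u C x 0 (C.length + 1)
    rw [Nat.add_zero] at this
    exact this
  -- occ (C ++ u) = occ C + cnt over the last window
  have eB : occ (C ++ u) x
      = occ C x + cnt (C ++ u) x (C.length + 1 - x.length) (u.length + x.length) := by
    rw [occ_eq_cnt (C ++ u), occ_eq_cnt C]
    have h1 : (C ++ u).length + 1 = (C.length + 1 - x.length) + (u.length + x.length) := by
      simp [List.length_append]; omega
    rw [h1, cnt_split, Nat.zero_add]
    have hpre : cnt C x 0 (C.length + 1 - x.length)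
        = cnt (C ++ u) x 0 (C.length + 1 - x.length) :=
      cnt_of_prefix x (List.prefix_append C u) (by omega)
    have hsplit := cnt_split C x 0 (C.length + 1 - x.length) x.length
    rw [Nat.zero_add] at hsplit
    have harg : (C.length + 1 - x.length) + x.length = C.length + 1 := by omega
    rw [harg] at hsplit
    have hz : cnt C x (C.length + 1 - x.length) x.length = 0 := cnt_eq_zero hxne (by omega)
    omega
  -- the two extra windows have equal counts
  have h5 := cnt_split (C ++ u) x (C.length + 1 - x.length) u.length x.length
  have h6 : cnt (C ++ u) x ((C.length + 1 - x.length) + u.length) x.length = 0 :=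
    cnt_eq_zero hxne (by simp [List.length_append]; omega)
  have hpreA : npow u (k + 1) <+: u ++ C := by
    have : u ++ C = (u ++ npow u k) ++ (v ++ npow u k) := by
      simp [hCdef, List.append_assoc]
    rw [this]
    show npow u (k + 1) <+: _
    exact List.prefix_append _ _
  have h7 : cnt (u ++ C) x 0 u.length = cnt (npow u (k+1)) x 0 u.length := by
    refine (cnt_of_prefix x hpreA ?_).symm
    rw [length_npow, hmul]
    omega
  have h8 : cnt (C ++ u) x (C.length + 1 - x.length) u.length
      = cnt (npow u (k+1)) x (k * u.length + 1 - x.length) u.length := by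
    have hCu : C ++ u = (npow u k ++ v) ++ npow u (k + 1) := by
      rw [npow_succ']
      simp [hCdef, List.append_assoc]
    have harg2 : C.length + 1 - x.length
        = (npow u k ++ v).length + (k * u.length + 1 - x.length) := by
      simp [List.length_append, length_npow]
      omega
    rw [hCu, harg2, cnt_shift]
  have hw1 := window u x hu (k+1) (k * u.length + 1 - x.length) (by rw [hmul]; omega)
  have hw2 := window u x hu (k+1) 0 (by rw [hmul]; omega)
  omega
theorem npow_one (w : List α) : npow w 1 = w := by simp [npow]

/-- a word commuting with `u ≠ []` is a prefix of a large power of `u`,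
hence determined by its length. -/
theorem eq_take_of_comm {u a : List α} (h : a ++ u = u ++ a) {n : ℕ}
    (hn : a.length ≤ n * u.length) : a = (npow u n).take a.length := by
  have h1 : a <+: npow u n ++ a := by
    rw [← comm_npow h n]; exact List.prefix_append _ _
  have h2 : a <+: npow u n :=
    List.prefix_of_prefix_length_le h1 (List.prefix_append _ _) (by rw [length_npow]; exact hn)
  exact List.prefix_iff_eq_take.mp h2

/-- two words commuting with a common nonempty word commute. -/
theorem comm3 {u a b : List α} (hu : u ≠ []) (ha : a ++ u = u ++ a)
    (hb : b ++ u = u ++ b) : a ++ b = b ++ a := by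
  have hU : 0 < u.length := List.length_pos_iff.mpr hu
  have hab : (a ++ b) ++ u = u ++ (a ++ b) := by
    rw [List.append_assoc, hb, ← List.append_assoc, ha, List.append_assoc]
  have hba : (b ++ a) ++ u = u ++ (b ++ a) := by
    rw [List.append_assoc, ha, ← List.append_assoc, hb, List.append_assoc]
  have hn : (a ++ b).length ≤ (a.length + b.length) * u.length := by
    have := Nat.le_mul_of_pos_right (a.length + b.length) hU
    simpa [List.length_append] using this
  have hn' : (b ++ a).length ≤ (a.length + b.length) * u.length := by
    have := Nat.le_mul_of_pos_right (a.length + b.length) hU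
    simp [List.length_append] at this ⊢
    omega
  have e1 := eq_take_of_comm hab hn
  have e2 := eq_take_of_comm hba hn'
  have hl : (b ++ a).length = (a ++ b).length := by
    simp [List.length_append, Nat.add_comm]
  rw [e1, e2, hl]

/-- commuting words are powers of a common word. -/
theorem comm_common_root : ∀ (N : ℕ) (u v : List α), u.length + v.length ≤ N →
    u ++ v = v ++ u → ∃ t m n, u = npow t m ∧ v = npow t n := by
  intro N
  induction N with
  | zero =>
    intro u v hlen _
    have hu : u = [] := List.length_eq_zero_iff.mp (by omega)
    have hv : v = [] := List.length_eq_zero_iff.mp (by omega)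
    exact ⟨[], 0, 0, by simp [hu, npow], by simp [hv, npow]⟩
  | succ N ih =>
    intro u v hlen h
    rcases eq_or_ne u [] with rfl | hune
    · exact ⟨v, 0, 1, rfl, (npow_one v).symm⟩
    rcases eq_or_ne v [] with rfl | hvne
    · exact ⟨u, 1, 0, (npow_one u).symm, rfl⟩
    have hu1 : 0 < u.length := List.length_pos_iff.mpr hune
    have hv1 : 0 < v.length := List.length_pos_iff.mpr hvne
    rcases le_total u.length v.length with hle | hle
    · have h1 : u <+: v ++ u := by rw [← h]; exact List.prefix_append _ _
      have h2 : u <+: v := List.prefix_of_prefix_length_le h1 (List.prefix_append _ _) hle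
      obtain ⟨w, rfl⟩ := h2
      have hw : u ++ w = w ++ u := by
        apply List.append_cancel_left (as := u)
        rw [h, List.append_assoc]
      have hlen' : u.length + w.length ≤ N := by
        simp [List.length_append] at hlen
        omega
      obtain ⟨t, m, n, hu', hw'⟩ := ih u w hlen' hw
      exact ⟨t, m, m + n, hu', by rw [npow_add, ← hu', ← hw']⟩
    · have h1 : v <+: u ++ v := by rw [h]; exact List.prefix_append _ _
      have h2 : v <+: u := List.prefix_of_prefix_length_le h1 (List.prefix_append _ _) hle
      obtain ⟨w, rfl⟩ := h2
      have hw : v ++ w = w ++ v := by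
        apply List.append_cancel_left (as := v)
        rw [← h, List.append_assoc]
      have hlen' : v.length + w.length ≤ N := by
        simp [List.length_append] at hlen
        omega
      obtain ⟨t, m, n, hv', hw'⟩ := ih v w hlen' hw
      exact ⟨t, m + n, m, by rw [npow_add, ← hv', ← hw'], hv'⟩

/-- a pairwise commuting set of words is contained in the powers of a single word. -/
theorem common_root_of_comm_set {L : Set (List α)}
    (h : ∀ u ∈ L, ∀ v ∈ L, u ++ v = v ++ u) : ∃ w, L ⊆ Set.range (npow w) := by
  classical
  by_cases hL : ∀ v ∈ L, v = []
  · exact ⟨[], fun v hv => ⟨0, by rw [hL v hv]; rfl⟩⟩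
  push_neg at hL
  obtain ⟨u₀, hu₀L, hu₀⟩ := hL
  have hex : ∃ n, ∃ z : List α, z ≠ [] ∧ z ++ u₀ = u₀ ++ z ∧ z.length = n :=
    ⟨u₀.length, u₀, hu₀, rfl, rfl⟩
  obtain ⟨w, hwne, hwcomm, hwlen⟩ := Nat.find_spec hex
  refine ⟨w, fun v hv => ?_⟩
  rcases eq_or_ne v [] with rfl | hvne
  · exact ⟨0, rfl⟩
  have hvcomm : v ++ u₀ = u₀ ++ v := h v hv u₀ hu₀L
  have hvw : v ++ w = w ++ v := comm3 hu₀ hvcomm hwcomm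
  obtain ⟨t, m, j, hv', hw'⟩ := comm_common_root (v.length + w.length) v w le_rfl hvw
  have htne : t ≠ [] := by rintro rfl; rw [npow_nil] at hw'; exact hwne hw'
  have ht1 : 0 < t.length := List.length_pos_iff.mpr htne
  have hj : 1 ≤ j := by
    rcases Nat.eq_zero_or_pos j with rfl | h'
    · exact absurd hw' (by simp [npow, hwne])
    · exact h'
  have htw : t ++ w = w ++ t := by rw [hw']; exact comm_npow rfl j
  have htu : t ++ u₀ = u₀ ++ t := comm3 hwne htw hwcomm.symm
  have hmin : Nat.find hex ≤ t.length := Nat.find_min' hex ⟨t, htne, htu, rfl⟩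
  have hlen : w.length = j * t.length := by rw [hw', length_npow]
  have hle : t.length ≤ j * t.length := by
    rw [Nat.mul_comm]; exact Nat.le_mul_of_pos_right t.length hj
  have hteq : t.length = w.length := by omega
  have hj1 : j = 1 := by
    have : j * t.length = 1 * t.length := by omega
    exact Nat.eq_of_mul_eq_mul_right ht1 this
  have hwt : w = t := by rw [hw', hj1, npow_one]
  exact ⟨m, by rw [hwt, ← hv']⟩

theorem join_npow (w : List α) : ∀ ls : List (List α),
    (∀ x ∈ ls, x ∈ Set.range (npow w)) → ls.flatten ∈ Set.range (npow w) := by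
  intro ls
  induction ls with
  | nil => intro _; exact ⟨0, rfl⟩
  | cons a ls ih =>
    intro hmem
    obtain ⟨m, hm⟩ := hmem a List.mem_cons_self
    obtain ⟨n, hn⟩ := ih (fun x hx => hmem x (List.mem_cons_of_mem a hx))
    exact ⟨m + n, by rw [npow_add, hm, hn]; simp⟩

end Aux

open Aux

/-- `L*` has a finite SSF iff `L ⊆ w*` for some word `w`. -/
theorem stmt13 {α : Type*} [DecidableEq α] [Fintype α] (L : Set (List α)) :
    HasFiniteSSF (kstar L) ↔ ∃ w : List α, L ⊆ Set.range (npow w) := by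
  classical
  constructor
  · rintro ⟨X, hXfin, hssf⟩
    by_contra hno
    push_neg at hno
    obtain ⟨u, huL, v, hvL, huv⟩ : ∃ u ∈ L, ∃ v ∈ L, u ++ v ≠ v ++ u := by
      by_contra hc
      push_neg at hc
      obtain ⟨w, hw⟩ := common_root_of_comm_set hc
      exact hno w hw
    have hune : u ≠ [] := by rintro rfl; simp at huv
    set k := hXfin.toFinset.sup List.length with hk
    have hbound : ∀ x ∈ X, x.length ≤ k := fun x hx =>
      Finset.le_sup (f := List.length) (hXfin.mem_toFinset.mpr hx)
    have hAmem : npow u (k+1) ++ v ++ npow u k ∈ kstar L := by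
      refine ⟨List.replicate (k+1) u ++ [v] ++ List.replicate k u, ?_, ?_⟩
      · intro x hx
        simp only [List.mem_append, List.mem_replicate, List.mem_singleton] at hx
        rcases hx with (⟨_, rfl⟩ | rfl) | ⟨_, rfl⟩ <;> assumption
      · simp [List.flatten_append, join_replicate]
    have hBmem : npow u k ++ v ++ npow u (k+1) ∈ kstar L := by
      refine ⟨List.replicate k u ++ [v] ++ List.replicate (k+1) u, ?_, ?_⟩
      · intro x hx
        simp only [List.mem_append, List.mem_replicate, List.mem_singleton] at hx
        rcases hx with (⟨_, rfl⟩ | rfl) | ⟨_, rfl⟩ <;> assumption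
      · simp [List.flatten_append, join_replicate]
    have hne : npow u (k+1) ++ v ++ npow u k ≠ npow u k ++ v ++ npow u (k+1) := by
      intro hAB
      apply huv
      have e1 : npow u (k+1) ++ v ++ npow u k = npow u k ++ (u ++ (v ++ npow u k)) := by
        rw [npow_succ']
        simp [List.append_assoc]
      have e2 : npow u k ++ v ++ npow u (k+1) = npow u k ++ (v ++ (u ++ npow u k)) := by
        show npow u k ++ v ++ (u ++ npow u k) = _
        simp [List.append_assoc]
      rw [e1, e2] at hAB
      have h2 := List.append_cancel_left hAB
      have h3 : (u ++ v) ++ npow u k = (v ++ u) ++ npow u k := by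
        rw [List.append_assoc, List.append_assoc]
        exact h2
      exact List.append_cancel_right h3
    obtain ⟨x, hxX, hocc⟩ := hssf _ hAmem _ hBmem hne
    exact hocc (main_occ v x hune (le_trans (hbound x hxX) (Nat.le_succ k)))
  · rintro ⟨w, hw⟩
    refine ⟨{[]}, Set.finite_singleton _, ?_⟩
    intro a ha b hb hab
    refine ⟨[], rfl, ?_⟩
    obtain ⟨ls, hls, rfl⟩ := ha
    obtain ⟨ms, hms, rfl⟩ := hb
    obtain ⟨m, hm⟩ := join_npow w ls (fun x hx => hw (hls x hx))
    obtain ⟨n, hn⟩ := join_npow w ms (fun x hx => hw (hms x hx))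
    rcases eq_or_ne w [] with rfl | hwne
    · exfalso
      apply hab
      rw [← hm, ← hn, npow_nil, npow_nil]
    have hW : 0 < w.length := List.length_pos_iff.mpr hwne
    rw [occ_nil, occ_nil]
    intro heq
    apply hab
    have hlen : ls.flatten.length = ms.flatten.length := by omega
    rw [← hm, ← hn, length_npow, length_npow] at hlen
    have hmn : m = n := Nat.eq_of_mul_eq_mul_right hW hlen
    rw [← hm, ← hn, hmn]
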